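/- A groupoid C is residually finite if and only if for every object X of C, the group Aut_C(X) is residually finite. -/

import Mathlib

/-!
A functor to a finite category restricts to a homomorphism from `Aut X` to a finite group, so
residual finiteness of a category passes to its automorphism groups. Conversely, in a groupoid
choose an arrow `c P : P ⟶ X` from every object of the component of `X`; conjugating by these
arrows, `h : P ⟶ Q ↦ (c P)⁻¹ ≫ h ≫ c Q`, is a functor onto the one-object category `Aut X`
(sending the other components to `1`) that is injective on arrows into the component of `X`.
Composing it with a homomorphism from `Aut X` to a finite group separates two given arrows.
-/

open CategoryTheory

/-- A category is residually finite if any two distinct parallel morphisms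
can be separated by a functor to a finite category. -/
def ResiduallyFiniteCat (C : Type*) [Category C] : Prop :=
  ∀ {X Y : C} (f g : X ⟶ Y), f ≠ g →
    ∃ (D : Type) (_ : SmallCategory D) (_ : FinCategory D) (F : C ⥤ D),
      F.map f ≠ F.map g

/-- A group is residually finite if distinct elements can be separated by
homomorphisms to finite groups. -/
def ResiduallyFiniteGroup (G : Type*) [Group G] : Prop :=
  ∀ f g : G, f ≠ g →
    ∃ (D : Type) (_ : Group D) (_ : Fintype D) (φ : G →* D), φ f ≠ φ g

instance CategoryTheory.Aut.finite_of_finCategory {D : Type*} [SmallCategory D]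
    [FinCategory D] (X : D) : Finite (Aut X) :=
  Finite.of_injective Iso.hom fun _ _ h => Iso.ext h

theorem ResiduallyFiniteCat.residuallyFiniteGroup_aut {C : Type*} [Category C]
    (hC : ResiduallyFiniteCat C) (X : C) : ResiduallyFiniteGroup (Aut X) := by
  intro f g hfg
  obtain ⟨D, _, _, F, hF⟩ := hC f.hom g.hom fun h => hfg (Iso.ext h)
  exact ⟨Aut (F.obj X), inferInstance, Fintype.ofFinite _, F.mapAut X,
    fun h => hF (congrArg Iso.hom h)⟩

namespace CategoryTheory.Groupoid

variable {C : Type*} [Groupoid C] (X : C)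

open Classical in
/-- By proof irrelevance `Nonempty.some ⟨h ≫ _⟩` does not depend on `h`: it is one arrow `P ⟶ X`
chosen once for every `P` in the component of `X`. -/
noncomputable def toAutMap {P Q : C} (h : P ⟶ Q) : Aut X :=
  if hQ : Nonempty (Q ⟶ X) then asIso (inv (Nonempty.some ⟨h ≫ hQ.some⟩) ≫ h ≫ hQ.some) else 1

theorem toAutMap_hom {P Q : C} (hP : Nonempty (P ⟶ X)) (hQ : Nonempty (Q ⟶ X)) (h : P ⟶ Q) :
    (toAutMap X h).hom = inv hP.some ≫ h ≫ hQ.some :=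
  congrArg Iso.hom (dif_pos hQ)

theorem toAutMap_of_isEmpty {P Q : C} (hQ : IsEmpty (Q ⟶ X)) (h : P ⟶ Q) : toAutMap X h = 1 :=
  dif_neg (not_nonempty_iff.mpr hQ)

noncomputable def toAut : C ⥤ SingleObj (Aut X) where
  obj _ := SingleObj.star _
  map := toAutMap X
  map_id P := by
    change toAutMap X (𝟙 P) = 1
    rcases isEmpty_or_nonempty (P ⟶ X) with hP | hP
    · exact toAutMap_of_isEmpty X hP _
    · refine Iso.ext ?_
      change _ = 𝟙 X
      rw [toAutMap_hom X hP hP]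
      simp
  map_comp {P Q R} h k := by
    change toAutMap X (h ≫ k) = toAutMap X k * toAutMap X h
    rcases isEmpty_or_nonempty (R ⟶ X) with hR | hR
    · have hQ : IsEmpty (Q ⟶ X) := ⟨fun t => hR.false (inv k ≫ t)⟩
      rw [toAutMap_of_isEmpty X hR, toAutMap_of_isEmpty X hR, toAutMap_of_isEmpty X hQ, mul_one]
    · have hQ : Nonempty (Q ⟶ X) := ⟨k ≫ hR.some⟩
      have hP : Nonempty (P ⟶ X) := ⟨h ≫ hQ.some⟩
      refine Iso.ext ?_
      change _ = (toAutMap X h).hom ≫ (toAutMap X k).hom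
      rw [toAutMap_hom X hP hR, toAutMap_hom X hP hQ, toAutMap_hom X hQ hR]
      simp

theorem toAutMap_injective {P Q : C} (hQ : Nonempty (Q ⟶ X)) :
    Function.Injective (toAutMap X : (P ⟶ Q) → Aut X) := by
  intro f g hfg
  have hP : Nonempty (P ⟶ X) := ⟨f ≫ hQ.some⟩
  have := congrArg Iso.hom hfg
  rwa [toAutMap_hom X hP hQ, toAutMap_hom X hP hQ, cancel_epi, cancel_mono] at this

end CategoryTheory.Groupoid

theorem ResiduallyFiniteCat.of_residuallyFiniteGroup_aut {C : Type*} [Groupoid C]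
    (hA : ∀ X : C, ResiduallyFiniteGroup (Aut X)) : ResiduallyFiniteCat C := by
  intro _ Y f g hfg
  obtain ⟨D, _, _, φ, hφ⟩ :=
    hA Y _ _ ((Groupoid.toAutMap_injective Y ⟨𝟙 Y⟩).ne hfg)
  exact ⟨SingleObj D, inferInstance, inferInstance, Groupoid.toAut Y ⋙ SingleObj.mapHom _ _ φ, hφ⟩

/-- A groupoid is residually finite iff all of its automorphism groups are
residually finite. -/
theorem residuallyFinite_groupoid_iff (C : Type) [Groupoid C] :
    ResiduallyFiniteCat C ↔ ∀ X : C, ResiduallyFiniteGroup (Aut X) :=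
  ⟨ResiduallyFiniteCat.residuallyFiniteGroup_aut, .of_residuallyFiniteGroup_aut⟩
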